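/- Let s : V → V be an injective function on a set V with no periodic points (s^n(v) = v implies n = 0), such that for all v, w ∈ V there exist natural numbers m, n with s^m(v) = s^n(w). Then the undirected graph on V with edge set {{v, s(v)} : v ∈ V} is connected and contains no cycles, i.e. it is a tree. -/
import Mathlib

private lemma getVert_mem_support' {V : Type*} {G : SimpleGraph V} :
    ∀ {a b : V} (p : G.Walk a b) (i : ℕ), p.getVert i ∈ p.support := by
  intro a b p
  induction p with
  | nil => intro i; simp [SimpleGraph.Walk.getVert]
  | cons h q ih =>
    intro i
    cases i with
    | zero => simp [SimpleGraph.Walk.getVert]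
    | succ j =>
      rw [SimpleGraph.Walk.getVert_cons_succ]
      simp only [SimpleGraph.Walk.support_cons, List.mem_cons]
      exact Or.inr (ih j)

private lemma path_monotone {V : Type*} (s : V → V)
    (hinj : Function.Injective s)
    (G : SimpleGraph V)
    (hG : ∀ v w, G.Adj v w ↔ v ≠ w ∧ (w = s v ∨ v = s w)) :
    ∀ {a b : V} (p : G.Walk a b), p.IsPath →
      ((∀ i, i ≤ p.length → p.getVert i = s^[i] a) ∨
       (∀ i, i ≤ p.length → p.getVert (p.length - i) = s^[i] b)) := by
  intro a b p
  induction p with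
  | nil =>
    intro _
    left
    intro i hi
    simp only [SimpleGraph.Walk.length_nil, Nat.le_zero] at hi
    subst hi
    simp [SimpleGraph.Walk.getVert]
  | @cons a c b h q ih =>
    intro hp
    have hq : q.IsPath := hp.of_cons
    have hna : a ∉ q.support := by
      have := hp.support_nodup
      simp only [SimpleGraph.Walk.support_cons, List.nodup_cons] at this
      exact this.1
    have hdir := (hG a c).mp h
    have hlen : (SimpleGraph.Walk.cons h q).length = q.length + 1 :=
      SimpleGraph.Walk.length_cons h q
    rcases ih hq with hup | hdown
    · -- q goes up from c
      rcases hdir.2 with hca | hac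
      · -- c = s a : whole walk goes up
        left
        intro i hi
        rw [hlen] at hi
        cases i with
        | zero => simp [SimpleGraph.Walk.getVert]
        | succ j =>
          rw [SimpleGraph.Walk.getVert_cons_succ]
          have : q.getVert j = s^[j] c := hup j (by omega)
          rw [this, hca, ← Function.iterate_succ_apply s j a]
      · -- a = s c : mixed, forces contradiction unless q.length = 0
        rcases Nat.eq_zero_or_pos q.length with hk0 | hkpos
        · -- q is trivial: c = b, walk is a single down edge
          have hcb : c = b := by
            have h1 := q.getVert_length
            rw [hk0, SimpleGraph.Walk.getVert_zero] at h1
            exact h1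
          right
          intro i hi
          rw [hlen, hk0] at hi ⊢
          interval_cases i
          · show (SimpleGraph.Walk.cons h q).getVert 1 = b
            rw [SimpleGraph.Walk.getVert_cons_succ, SimpleGraph.Walk.getVert_zero]
            exact hcb
          · show (SimpleGraph.Walk.cons h q).getVert 0 = s^[1] b
            rw [SimpleGraph.Walk.getVert_zero]
            show a = s b
            rw [← hcb]; exact hac
        · exfalso
          have h1 : q.getVert 1 = s^[1] c := hup 1 (by omega)
          have : a = q.getVert 1 := by
            rw [h1]; simpa using hac
          exact hna (this ▸ getVert_mem_support' q 1)
    · -- q goes down to b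
      rcases Nat.eq_zero_or_pos q.length with hk0 | hkpos
      · -- q trivial: c = b
        have hcb : c = b := by
          have h1 := q.getVert_length
          rw [hk0, SimpleGraph.Walk.getVert_zero] at h1
          exact h1
        rcases hdir.2 with hca | hac
        · left
          intro i hi
          rw [hlen, hk0] at hi
          interval_cases i
          · simp [SimpleGraph.Walk.getVert]
          · show (SimpleGraph.Walk.cons h q).getVert 1 = s^[1] a
            rw [SimpleGraph.Walk.getVert_cons_succ, SimpleGraph.Walk.getVert_zero]
            exact hca
        · right
          intro i hi
          rw [hlen, hk0] at hi ⊢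
          interval_cases i
          · show (SimpleGraph.Walk.cons h q).getVert 1 = b
            rw [SimpleGraph.Walk.getVert_cons_succ, SimpleGraph.Walk.getVert_zero]
            exact hcb
          · show (SimpleGraph.Walk.cons h q).getVert 0 = s^[1] b
            rw [SimpleGraph.Walk.getVert_zero]
            show a = s b
            rw [← hcb]; exact hac
      · rcases hdir.2 with hca | hac
        · -- c = s a but q goes down : contradiction
          exfalso
          have hc : c = s^[q.length] b := by
            have h1 := hdown q.length (le_refl _)
            rw [Nat.sub_self, SimpleGraph.Walk.getVert_zero] at h1
            exact h1
          obtain ⟨j, hj⟩ : ∃ j, q.length = j + 1 := ⟨q.length - 1, by omega⟩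
          have h2 : s a = s (s^[j] b) := by
            rw [← hca, hc, hj, Function.iterate_succ_apply' s j b]
          have ha : a = s^[j] b := hinj h2
          have h3 : a = q.getVert (q.length - j) := by
            rw [hdown j (by omega), ha]
          exact hna (h3 ▸ getVert_mem_support' q (q.length - j))
        · -- a = s c : whole walk goes down
          right
          intro i hi
          rw [hlen] at hi ⊢
          rcases Nat.lt_or_ge i (q.length + 1) with hik | hik
          · have he : q.length + 1 - i = (q.length - i) + 1 := by omega
            rw [he, SimpleGraph.Walk.getVert_cons_succ]
            exact hdown i (by omega)
          · have hi' : i = q.length + 1 := by omega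
            subst hi'
            rw [Nat.sub_self, SimpleGraph.Walk.getVert_zero]
            have hc : c = s^[q.length] b := by
              have h1 := hdown q.length (le_refl _)
              rw [Nat.sub_self, SimpleGraph.Walk.getVert_zero] at h1
              exact h1
            rw [hac, congrArg s hc]
            exact (Function.iterate_succ_apply' s q.length b).symm

/-- Abstract Reidemeister–Singer tree: if `s : V → V` is injective with no periodic points
and any two elements have a common iterated image, then the graph with edges
`{v, s v}` is a tree. -/
theorem stabilization_graph_is_tree
    {V : Type*} [Nonempty V] (s : V → V)
    (hinj : Function.Injective s)
    (hper : ∀ (v : V) (n : ℕ), s^[n] v = v → n = 0)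
    (hcommon : ∀ v w : V, ∃ m n : ℕ, s^[m] v = s^[n] w)
    (G : SimpleGraph V)
    (hG : ∀ v w, G.Adj v w ↔ v ≠ w ∧ (w = s v ∨ v = s w)) :
    G.IsTree := by
  have hadj : ∀ v : V, G.Adj v (s v) := by
    intro v
    rw [hG]
    refine ⟨fun hvs => ?_, Or.inl rfl⟩
    have : s^[1] v = v := by simpa using hvs.symm
    exact one_ne_zero (hper v 1 this)
  constructor
  · -- connected
    constructor
    intro v w
    have hreach : ∀ (m : ℕ) (v : V), G.Reachable v (s^[m] v) := by
      intro m
      induction m with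
      | zero => intro v; rfl
      | succ n ih =>
        intro v
        refine (ih v).trans ?_
        rw [Function.iterate_succ_apply' s n v]
        exact (hadj (s^[n] v)).reachable
    obtain ⟨m, n, hmn⟩ := hcommon v w
    exact (hreach m v).trans (hmn ▸ (hreach n w).symm)
  · -- acyclic
    intro u p hp
    cases p with
    | nil => exact hp.ne_nil rfl
    | @cons _ c _ h q =>
      have hlen : 3 ≤ (SimpleGraph.Walk.cons h q).length := hp.three_le_length
      rw [SimpleGraph.Walk.length_cons] at hlen
      have hq : q.IsPath := ((SimpleGraph.Walk.cons_isCycle_iff q h).mp hp).1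
      have hk2 : 2 ≤ q.length := by omega
      have hdir := (hG u c).mp h
      rcases path_monotone s hinj G hG q hq with hup | hdown
      · -- s^[q.length] c = u
        have hcu : s^[q.length] c = u := by
          have h1 := hup q.length (le_refl _)
          rw [SimpleGraph.Walk.getVert_length] at h1
          exact h1.symm
        rcases hdir.2 with hcsu | husc
        · -- c = s u : s^[q.length+1] u = u
          have h2 : s^[q.length+1] u = u := by
            rw [Function.iterate_succ_apply s q.length u, ← hcsu, hcu]
          exact Nat.succ_ne_zero q.length (hper u (q.length+1) h2)
        · -- u = s c : s^[q.length] c = s c ⇒ periodic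
          obtain ⟨j, hj⟩ : ∃ j, q.length = j + 1 := ⟨q.length - 1, by omega⟩
          have h2 : s (s^[j] c) = s c := by
            have e : s (s^[j] c) = s^[j+1] c := (Function.iterate_succ_apply' s j c).symm
            rw [e, ← hj, hcu, husc]
          have hjc : s^[j] c = c := hinj h2
          have : j = 0 := hper c j hjc
          omega
      · -- c = s^[q.length] u
        have hcu : c = s^[q.length] u := by
          have h1 := hdown q.length (le_refl _)
          rw [Nat.sub_self, SimpleGraph.Walk.getVert_zero] at h1
          exact h1
        rcases hdir.2 with hcsu | husc
        · -- c = s u and c = s^[q.length] u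
          obtain ⟨j, hj⟩ : ∃ j, q.length = j + 1 := ⟨q.length - 1, by omega⟩
          have h2 : s (s^[j] u) = s u := by
            have e : s (s^[j] u) = s^[j+1] u := (Function.iterate_succ_apply' s j u).symm
            rw [e, ← hj, ← hcu, hcsu]
          have hju : s^[j] u = u := hinj h2
          have : j = 0 := hper u j hju
          omega
        · -- u = s c = s^[q.length+1] u
          have h2 : s^[q.length+1] u = u := by
            rw [Function.iterate_succ_apply' s q.length u, ← hcu, ← husc]
          exact Nat.succ_ne_zero q.length (hper u (q.length+1) h2)
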